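/- Define u : 𝔻 → ℝ on the open unit disc by u(re^{iφ}) := −∑_{n=1}^{∞} n rⁿ sin(nφ), equivalently u(z) = −Im(z/(1−z)²). Then u is harmonic on 𝔻, for every φ ∈ [0,2π) one has lim_{r→1-} u(re^{iφ}) = 0, and u is not identically zero; moreover M_r(u) = O((1-r)^{-2}) as r → 1-. (This shows the growth condition in Dahlberg's radial uniqueness theorem is sharp.) -/

import Mathlib

open Set Filter Metric MeasureTheory

noncomputable section

/-- A real-valued function `u` is harmonic on `D ⊆ ℂ` if it is twice continuously
differentiable on `D` and satisfies Laplace's equation `Δu = 0` there. -/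
def IsHarmonicOn (u : ℂ → ℝ) (D : Set ℂ) : Prop :=
  ContDiffOn ℝ 2 u D ∧
    ∀ z ∈ D,
      fderiv ℝ (fun w => fderiv ℝ u w 1) z 1 +
        fderiv ℝ (fun w => fderiv ℝ u w Complex.I) z Complex.I = 0

/-- The function `u(re^{iφ}) = -∑_{n≥1} n rⁿ sin(nφ)`, in closed form `-Im(z/(1-z)²)`. -/
def dahlbergExample (z : ℂ) : ℝ := -(z / (1 - z) ^ 2).im

/-!
`u = -Im f` with `f z = z / (1 - z)²` holomorphic on the disc, so `u` is harmonic there.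
On the unit circle `conj w = w⁻¹`, which makes `f w = 1 / (w + conj w - 2)` real, so `u` vanishes
on the circle; for `w ≠ 1` the radial limit is then `u w = 0` by continuity, while along the
radius ending at `1` the function `u` is identically zero because `f` is real on the real axis.
-/

open Complex InnerProductSpace

theorem fderiv_fderiv_apply_eq_iteratedFDeriv {E F : Type*} [NormedAddCommGroup E]
    [NormedSpace ℝ E] [NormedAddCommGroup F] [NormedSpace ℝ F] {f : E → F} {x : E}
    (hf : ContDiffAt ℝ 2 f x) (v : E) :
    fderiv ℝ (fun w => fderiv ℝ f w v) x v = iteratedFDeriv ℝ 2 f x ![v, v] := by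
  have hd : DifferentiableAt ℝ (fderiv ℝ f) x :=
    (hf.fderiv_right (m := 1) (by norm_num)).differentiableAt (by norm_num)
  rw [fderiv_clm_apply hd (differentiableAt_const v), iteratedFDeriv_two_apply]
  simp

theorem InnerProductSpace.HarmonicAt.fderiv_fderiv_one_add_fderiv_fderiv_I {F : Type*}
    [NormedAddCommGroup F] [NormedSpace ℝ F] {f : ℂ → F} {z : ℂ} (hf : HarmonicAt f z) :
    fderiv ℝ (fun w => fderiv ℝ f w 1) z 1 + fderiv ℝ (fun w => fderiv ℝ f w I) z I = 0 := by
  rw [fderiv_fderiv_apply_eq_iteratedFDeriv hf.1, fderiv_fderiv_apply_eq_iteratedFDeriv hf.1,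
    ← congrFun (laplacian_eq_iteratedFDeriv_complexPlane f) z]
  exact hf.2.self_of_nhds

theorem InnerProductSpace.HarmonicOnNhd.isHarmonicOn {u : ℂ → ℝ} {D : Set ℂ}
    (hu : HarmonicOnNhd u D) : IsHarmonicOn u D :=
  ⟨hu.contDiffOn, fun z hz => (hu z hz).fderiv_fderiv_one_add_fderiv_fderiv_I⟩

theorem analyticAt_div_one_sub_sq {z : ℂ} (hz : z ≠ 1) :
    AnalyticAt ℂ (fun z : ℂ => z / (1 - z) ^ 2) z := by
  have hden : (1 - z) ^ 2 ≠ 0 := pow_ne_zero 2 (sub_ne_zero.2 hz.symm)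
  fun_prop (disch := exact hden)

theorem isHarmonicOn_dahlbergExample : IsHarmonicOn dahlbergExample (ball 0 1) :=
  HarmonicOnNhd.isHarmonicOn fun _ hz =>
    (analyticAt_div_one_sub_sq (ne_of_mem_of_not_mem hz (by simp))).harmonicAt_im.neg

theorem dahlbergExample_ofReal (r : ℝ) : dahlbergExample r = 0 := by
  rw [dahlbergExample, neg_eq_zero]
  norm_cast

-- At `w = 1` this is the junk value `1 / 0 = 0`.
theorem dahlbergExample_eq_zero_of_norm_eq_one {w : ℂ} (hw : ‖w‖ = 1) :
    dahlbergExample w = 0 := by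
  rcases eq_or_ne w 1 with rfl | hw1
  · simp [dahlbergExample]
  have hw0 : w ≠ 0 := norm_ne_zero_iff.1 (by rw [hw]; exact one_ne_zero)
  have hsub : 1 - w ≠ 0 := sub_ne_zero.2 hw1.symm
  rw [dahlbergExample, neg_eq_zero]
  refine conj_eq_iff_im.1 ?_
  rw [map_div₀, map_pow, map_sub, map_one, ← inv_eq_conj hw]
  field_simp
  ring

theorem tendsto_dahlbergExample_ofReal_mul {w : ℂ} (hw : ‖w‖ = 1) :
    Tendsto (fun r : ℝ => dahlbergExample (r * w)) (nhds 1) (nhds 0) := by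
  rcases eq_or_ne w 1 with rfl | hw1
  · simp only [mul_one, dahlbergExample_ofReal]
    exact tendsto_const_nhds
  have hcont : ContinuousAt (fun r : ℝ => dahlbergExample (r * w)) 1 := by
    have hden : (1 - ((1 : ℝ) : ℂ) * w) ^ 2 ≠ 0 := by
      simpa using pow_ne_zero 2 (sub_ne_zero.2 hw1.symm)
    unfold dahlbergExample
    fun_prop (disch := exact hden)
  simpa [dahlbergExample_eq_zero_of_norm_eq_one hw] using hcont.tendsto

theorem norm_div_one_sub_sq_le {z : ℂ} (hz : ‖z‖ ≠ 1) :
    ‖z / (1 - z) ^ 2‖ ≤ ‖z‖ / (1 - ‖z‖) ^ 2 := by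
  have hne : 1 - ‖z‖ ≠ 0 := sub_ne_zero.2 (Ne.symm hz)
  have hpos : 0 < (1 - ‖z‖) ^ 2 := by positivity
  rw [norm_div, norm_pow]
  refine div_le_div_of_nonneg_left (norm_nonneg z) hpos ?_
  rw [← sq_abs]
  gcongr
  simpa using abs_norm_sub_norm_le (1 : ℂ) z

theorem abs_dahlbergExample_le {z : ℂ} (hz : ‖z‖ < 1) :
    |dahlbergExample z| ≤ ((1 - ‖z‖) ^ 2)⁻¹ :=
  calc |dahlbergExample z| ≤ ‖z / (1 - z) ^ 2‖ := by
        rw [dahlbergExample, abs_neg]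
        exact abs_im_le_norm _
    _ ≤ ‖z‖ / (1 - ‖z‖) ^ 2 := norm_div_one_sub_sq_le hz.ne
    _ ≤ ((1 - ‖z‖) ^ 2)⁻¹ := by
        rw [div_eq_mul_inv]
        exact mul_le_of_le_one_left (by positivity) hz.le

theorem dahlbergExample_I_div_two : dahlbergExample (I / 2) = -6 / 25 := by
  simp only [dahlbergExample]
  norm_num [div_im, div_re, normSq_apply, pow_two]

/-- The function `u(z) = -Im(z/(1-z)²)` is harmonic on the unit disc, has radial boundary
limit `0` everywhere, is not identically zero, and satisfies `M_r(u) = O((1-r)⁻²)`.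
This shows the growth condition in Dahlberg's radial uniqueness theorem is sharp. -/
theorem dahlberg_sharp :
    IsHarmonicOn dahlbergExample (ball (0:ℂ) 1) ∧
    (∀ φ ∈ Ico (0:ℝ) (2 * Real.pi),
      Tendsto (fun r : ℝ => dahlbergExample ((r : ℂ) * Complex.exp ((φ : ℂ) * Complex.I)))
        (nhdsWithin 1 (Iio 1)) (nhds 0)) ∧
    (∃ z ∈ ball (0:ℂ) 1, dahlbergExample z ≠ 0) ∧
    (∃ C : ℝ, ∀ᶠ r : ℝ in nhdsWithin 1 (Iio 1),
      ∀ φ : ℝ, |dahlbergExample ((r : ℂ) * Complex.exp ((φ : ℂ) * Complex.I))| ≤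
        C * ((1 - r) ^ 2)⁻¹) := by
  refine ⟨isHarmonicOn_dahlbergExample, fun φ _ => ?_, ⟨I / 2, ?_, ?_⟩, ⟨1, ?_⟩⟩
  · exact (tendsto_dahlbergExample_ofReal_mul (norm_exp_ofReal_mul_I φ)).mono_left
      nhdsWithin_le_nhds
  · rw [mem_ball_zero_iff, norm_div]
    norm_num
  · rw [dahlbergExample_I_div_two]
    norm_num
  · filter_upwards [Ico_mem_nhdsLT (show (0 : ℝ) < 1 by norm_num)] with r hr φ
    have hnorm : ‖(r : ℂ) * exp (φ * I)‖ = r := by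
      rw [norm_mul, norm_exp_ofReal_mul_I, norm_real, Real.norm_of_nonneg hr.1, mul_one]
    simpa only [one_mul, hnorm] using abs_dahlbergExample_le (hnorm.trans_lt hr.2)
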